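/- arXiv:math/0611877 — 2 statements merged into one kernel-verified Lean document; each statement's English description precedes it below -/
import Mathlib

section
/- Let G be a group with a finite generating set X. Then (G,X) has the asynchronous basepoint loop shortening property if and only if (G,X) has the synchronous basepoint loop shortening property. -/
/-! Basic notions for a group `G` with a generating set `X`:
words over `X ∪ X⁻¹`, the word metric, paths, loops and fellow traveling. -/

namespace LoopShortening

variable {G : Type*} [Group G]

/-- `w` is a word over `X ∪ X⁻¹`: every letter of `w` lies in `X ∪ X⁻¹`. -/
def IsWord (X : Set G) (w : List G) : Prop := ∀ x ∈ w, x ∈ X ∨ x⁻¹ ∈ X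

/-- The word metric with respect to `X`: `wdist X g h` is the least `n` such that
`g⁻¹h` is a product of `n` elements of `X ∪ X⁻¹`. -/
noncomputable def wdist (X : Set G) (g h : G) : ℕ :=
  sInf {n : ℕ | ∃ l : List G, IsWord X l ∧ l.length = n ∧ g * l.prod = h}

/-- The point at time `t ∈ ℕ` along the path based at `g₀` labelled by the word `w`;
for `t ≥ |w|` this is the endpoint of the path. -/
def pathAt (g₀ : G) (w : List G) (t : ℕ) : G := g₀ * (w.take t).prod

/-- The word `w` labels a loop (its evaluation in `G` is the identity, so the
path it labels ends where it starts). -/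
def IsLoop (w : List G) : Prop := w.prod = 1

/-- The paths based at `g₀` and `h₀` labelled by `w` and `u` synchronously
`k`-fellow travel. -/
def SyncFellow (X : Set G) (k : ℕ) (g₀ : G) (w : List G) (h₀ : G) (u : List G) : Prop :=
  ∀ t : ℕ, wdist X (pathAt g₀ w t) (pathAt h₀ u t) ≤ k

/-- The paths based at `g₀` and `h₀` labelled by `w` and `u` asynchronously
`k`-fellow travel: there is a nondecreasing unbounded reparameterization `φ`. -/
def AsyncFellow (X : Set G) (k : ℕ) (g₀ : G) (w : List G) (h₀ : G) (u : List G) : Prop :=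
  ∃ φ : ℕ → ℕ, Monotone φ ∧ (∀ m : ℕ, ∃ t : ℕ, m ≤ φ t) ∧
    ∀ t : ℕ, wdist X (pathAt g₀ w t) (pathAt h₀ u (φ t)) ≤ k

/-- `(G,X)` has the synchronous basepoint loop shortening property: there is `k > 0`
such that every nonempty loop based at `g₀` is synchronously `k`-fellow traveled by a
strictly shorter loop based at the same point `g₀`. -/
def SyncBLSP (X : Set G) : Prop :=
  ∃ k : ℕ, 0 < k ∧ ∀ (g₀ : G) (w : List G), IsWord X w → IsLoop w → w ≠ [] →
    ∃ u : List G, IsWord X u ∧ IsLoop u ∧ u.length < w.length ∧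
      SyncFellow X k g₀ w g₀ u

/-- `(G,X)` has the asynchronous basepoint loop shortening property. -/
def AsyncBLSP (X : Set G) : Prop :=
  ∃ k : ℕ, 0 < k ∧ ∀ (g₀ : G) (w : List G), IsWord X w → IsLoop w → w ≠ [] →
    ∃ u : List G, IsWord X u ∧ IsLoop u ∧ u.length < w.length ∧
      AsyncFellow X k g₀ w g₀ u

/-!
Given a nonempty loop `w` of length `n` and an asynchronous `k`-fellow traveller `u` of it,
read off `u` only at the times `φ t` and relax it to a sequence of points `q t` with
`d(w(t), q(t)) ≤ k`, `q 0 = q n = w(0)`, whose cost `∑ d(q t, q (t+1))` is at most `|u| < n`.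
Take such a sequence of minimal cost. Replacing `q` on an interval `(S, E)` by `w` itself
costs at most `(E - S) + 2k`, so by minimality the cost of `q` on every `[S, E]` is bounded by
the same quantity: `q` never outruns the clock by more than `2k`. Concatenating geodesics
between consecutive `q t`, and inserting `a a⁻¹` pairs whenever the word falls more than
`2k + 2` letters short of the elapsed time, gives a loop that stays within bounded distance
of `q t`, hence of `w(t)`, at time `t`; the bound on the cost keeps its length below `n`.
-/

variable {X : Set G}

section WordMetric

theorem isWord_nil : IsWord X ([] : List G) := by simp [IsWord]

theorem isWord_singleton {a : G} (ha : a ∈ X) : IsWord X [a] := by simp [IsWord, ha]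

theorem IsWord.append {l₁ l₂ : List G} (h₁ : IsWord X l₁) (h₂ : IsWord X l₂) :
    IsWord X (l₁ ++ l₂) := by
  intro x hx
  rcases List.mem_append.mp hx with h | h
  exacts [h₁ x h, h₂ x h]

theorem IsWord.take {l : List G} (h : IsWord X l) (n : ℕ) : IsWord X (l.take n) :=
  fun x hx => h x (List.mem_of_mem_take hx)

theorem IsWord.drop {l : List G} (h : IsWord X l) (n : ℕ) : IsWord X (l.drop n) :=
  fun x hx => h x (List.mem_of_mem_drop hx)

theorem IsWord.inv_reverse {l : List G} (h : IsWord X l) :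
    IsWord X (l.map (·⁻¹)).reverse := by
  intro x hx
  obtain ⟨y, hy, rfl⟩ := List.mem_map.mp (List.mem_reverse.mp hx)
  simpa [or_comm] using h y hy

theorem wdist_mul_prod_le {l : List G} (hl : IsWord X l) (g : G) :
    wdist X g (g * l.prod) ≤ l.length :=
  Nat.sInf_le ⟨l, hl, rfl, rfl⟩

theorem wdist_self (g : G) : wdist X g g = 0 := by
  simpa using wdist_mul_prod_le (isWord_nil (X := X)) g

theorem exists_isWord_mul_prod_eq (hgen : Subgroup.closure X = ⊤) (g h : G) :
    ∃ l : List G, IsWord X l ∧ g * l.prod = h := by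
  have hmem : g⁻¹ * h ∈ Submonoid.closure (X ∪ X⁻¹) := by
    rw [← Subgroup.closure_toSubmonoid, hgen]
    trivial
  obtain ⟨l, hl, hprod⟩ := Submonoid.exists_list_of_mem_closure hmem
  exact ⟨l, fun x hx => hl x hx, by rw [hprod, mul_inv_cancel_left]⟩

/-- Junk (an arbitrary list) unless `g⁻¹ * h` lies in the subgroup generated by `X`. -/
noncomputable def geodesic (X : Set G) (g h : G) : List G :=
  Classical.epsilon fun l => IsWord X l ∧ l.length = wdist X g h ∧ g * l.prod = h

section Generating

variable (hgen : Subgroup.closure X = ⊤)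
include hgen

theorem geodesic_spec (g h : G) :
    IsWord X (geodesic X g h) ∧ (geodesic X g h).length = wdist X g h ∧
      g * (geodesic X g h).prod = h := by
  obtain ⟨l, hl, hprod⟩ := exists_isWord_mul_prod_eq hgen g h
  exact Classical.epsilon_spec
    (Nat.sInf_mem (s := {n | ∃ l : List G, IsWord X l ∧ l.length = n ∧ g * l.prod = h})
      ⟨l.length, l, hl, rfl, hprod⟩)

theorem isWord_geodesic (g h : G) : IsWord X (geodesic X g h) := (geodesic_spec hgen g h).1

theorem length_geodesic (g h : G) : (geodesic X g h).length = wdist X g h :=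
  (geodesic_spec hgen g h).2.1

theorem mul_prod_geodesic (g h : G) : g * (geodesic X g h).prod = h :=
  (geodesic_spec hgen g h).2.2

theorem wdist_triangle (g m h : G) : wdist X g h ≤ wdist X g m + wdist X m h := by
  have := wdist_mul_prod_le ((isWord_geodesic hgen g m).append (isWord_geodesic hgen m h)) g
  rwa [List.prod_append, ← mul_assoc, mul_prod_geodesic hgen, mul_prod_geodesic hgen,
    List.length_append, length_geodesic hgen, length_geodesic hgen] at this

theorem wdist_comm (g h : G) : wdist X g h = wdist X h g := by
  have key : ∀ g h : G, wdist X h g ≤ wdist X g h := fun g h => by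
    have := wdist_mul_prod_le (isWord_geodesic hgen g h).inv_reverse h
    rwa [← List.prod_inv_reverse, mul_inv_eq_of_eq_mul (mul_prod_geodesic hgen g h).symm,
      List.length_reverse, List.length_map, length_geodesic hgen] at this
  exact le_antisymm (key h g) (key g h)

end Generating

end WordMetric

section Paths

variable {w : List G}

theorem pathAt_zero (g₀ : G) (w : List G) : pathAt g₀ w 0 = g₀ := by simp [pathAt]

theorem pathAt_min_length (g₀ : G) (w : List G) (t : ℕ) :
    pathAt g₀ w (min t w.length) = pathAt g₀ w t := by
  rcases le_total t w.length with h | h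
  · rw [min_eq_left h]
  · rw [min_eq_right h, pathAt, pathAt, List.take_length, List.take_of_length_le h]

theorem IsLoop.pathAt_of_length_le (hw : IsLoop w) (g₀ : G) {t : ℕ} (h : w.length ≤ t) :
    pathAt g₀ w t = g₀ := by
  rw [pathAt, List.take_of_length_le h, hw, mul_one]

theorem wdist_pathAt_le_sub (hw : IsWord X w) (g₀ : G) {s t : ℕ} (hst : s ≤ t) :
    wdist X (pathAt g₀ w s) (pathAt g₀ w t) ≤ t - s := by
  have hsplit : pathAt g₀ w t = pathAt g₀ w s * ((w.take t).drop s).prod := by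
    conv_lhs => rw [pathAt, ← List.take_append_drop s (w.take t)]
    rw [List.take_take, min_eq_left hst, List.prod_append, pathAt, mul_assoc]
  rw [hsplit]
  refine (wdist_mul_prod_le ((hw.take t).drop s) _).trans ?_
  simp only [List.length_drop, List.length_take]
  omega

theorem wdist_pathAt_le (hgen : Subgroup.closure X = ⊤) (hw : IsWord X w) (g₀ : G) (s t : ℕ) :
    wdist X (pathAt g₀ w s) (pathAt g₀ w t) ≤ t - s + (s - t) := by
  rcases le_total s t with h | h
  · exact (wdist_pathAt_le_sub hw g₀ h).trans le_self_add
  · rw [wdist_comm hgen]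
    exact (wdist_pathAt_le_sub hw g₀ h).trans le_add_self

end Paths

section ChainLength

noncomputable def chainLength (X : Set G) (q : ℕ → G) (S E : ℕ) : ℕ :=
  ∑ t ∈ Finset.Ico S E, wdist X (q t) (q (t + 1))

variable {q f : ℕ → G} {S E : ℕ}

@[simp]
theorem chainLength_self : chainLength X q S S = 0 := by simp [chainLength]

theorem chainLength_succ (h : S ≤ E) :
    chainLength X q S (E + 1) = chainLength X q S E + wdist X (q E) (q (E + 1)) :=
  Finset.sum_Ico_succ_top h _

theorem chainLength_self_succ (t : ℕ) : chainLength X q t (t + 1) = wdist X (q t) (q (t + 1)) := by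
  simp [chainLength_succ le_rfl]

theorem chainLength_add {F : ℕ} (h₁ : S ≤ E) (h₂ : E ≤ F) :
    chainLength X q S E + chainLength X q E F = chainLength X q S F :=
  Finset.sum_Ico_consecutive _ h₁ h₂

theorem chainLength_congr (h : ∀ t, S ≤ t → t ≤ E → f t = q t) :
    chainLength X f S E = chainLength X q S E := by
  refine Finset.sum_congr rfl fun t ht => ?_
  rw [Finset.mem_Ico] at ht
  rw [h t ht.1 (by omega), h (t + 1) (by omega) (by omega)]

theorem chainLength_pathAt_comp_le {w : List G} (hw : IsWord X w) (g₀ : G) {ψ : ℕ → ℕ}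
    (hψ : Monotone ψ) (hSE : S ≤ E) :
    chainLength X (fun t => pathAt g₀ w (ψ t)) S E ≤ ψ E - ψ S := by
  induction E, hSE using Nat.le_induction with
  | base => simp
  | succ E hSE ih =>
    rw [chainLength_succ hSE]
    have hstep := wdist_pathAt_le_sub hw g₀ (hψ (Nat.le_add_right E 1))
    have := hψ hSE
    have := hψ (Nat.le_add_right E 1)
    omega

theorem chainLength_le_of_eqOn_Ioo (hgen : Subgroup.closure X = ⊤) {g : ℕ → G} (hSE : S < E)
    (h : ∀ t, S < t → t < E → f t = g t) :
    chainLength X f S E ≤ wdist X (f S) (g S) + chainLength X g S E + wdist X (g E) (f E) := by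
  replace hSE : S + 1 ≤ E := hSE
  induction E, hSE using Nat.le_induction with
  | base =>
    rw [chainLength_self_succ, chainLength_self_succ]
    have h₁ := wdist_triangle hgen (f S) (g S) (f (S + 1))
    have h₂ := wdist_triangle hgen (g S) (g (S + 1)) (f (S + 1))
    omega
  | succ E hSE ih =>
    have hE : f E = g E := h E hSE (by omega)
    have := ih fun t h₁ h₂ => h t h₁ (by omega)
    rw [chainLength_succ (by omega), chainLength_succ (by omega), hE]
    rw [hE, wdist_self] at this
    have := wdist_triangle hgen (g E) (g (E + 1)) (f (E + 1))
    omega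

end ChainLength

section Shadow

/-- A discrete relaxation of a synchronous fellow traveller of the loop `w`: consecutive
points of `q` may be far apart. -/
def IsShadow (X : Set G) (k : ℕ) (g₀ : G) (w : List G) (q : ℕ → G) : Prop :=
  q 0 = g₀ ∧ (∀ t, w.length ≤ t → q t = g₀) ∧ ∀ t, wdist X (pathAt g₀ w t) (q t) ≤ k

variable {k : ℕ} {g₀ : G} {w u : List G}

theorem AsyncFellow.exists_isShadow (hu : IsWord X u) (hul : IsLoop u) (hwl : IsLoop w)
    (h : AsyncFellow X k g₀ w g₀ u) :
    ∃ q, IsShadow X k g₀ w q ∧ chainLength X q 0 w.length ≤ u.length := by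
  obtain ⟨φ, hφ, -, hdist⟩ := h
  set ψ : ℕ → ℕ := fun t =>
    if t = 0 then 0 else if w.length ≤ t then u.length else min (φ t) u.length with hψ_def
  have hψ : Monotone ψ := by
    intro s t hst
    have := hφ hst
    simp only [hψ_def]
    split_ifs <;> omega
  have hshadow : IsShadow X k g₀ w fun t => pathAt g₀ u (ψ t) := by
    refine ⟨by simp [hψ_def, pathAt_zero], fun t ht => ?_, fun t => ?_⟩
    · simp only [hψ_def]
      split_ifs
      exacts [pathAt_zero g₀ u, hul.pathAt_of_length_le g₀ le_rfl]
    · simp only [hψ_def]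
      split_ifs with h₀ hn
      · simp [h₀, pathAt_zero, wdist_self]
      · simp [hwl.pathAt_of_length_le g₀ hn, hul.pathAt_of_length_le g₀ le_rfl, wdist_self]
      · rw [pathAt_min_length]
        exact hdist t
  refine ⟨_, hshadow, (chainLength_pathAt_comp_le hu g₀ hψ (Nat.zero_le _)).trans ?_⟩
  simp only [hψ_def]
  split_ifs <;> omega

theorem IsShadow.chainLength_le_of_minimal (hgen : Subgroup.closure X = ⊤) (hw : IsWord X w)
    {q : ℕ → G} (hq : IsShadow X k g₀ w q)
    (hmin : ∀ f, IsShadow X k g₀ w f → chainLength X q 0 w.length ≤ chainLength X f 0 w.length)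
    {S E : ℕ} (hSE : S ≤ E) (hE : E ≤ w.length) :
    chainLength X q S E ≤ E - S + 2 * k := by
  rcases hSE.eq_or_lt with rfl | hlt
  · simp
  set f : ℕ → G := fun t => if S < t ∧ t < E then pathAt g₀ w t else q t with hf_def
  have hf : IsShadow X k g₀ w f := by
    refine ⟨by simp [hf_def, hq.1], fun t ht => ?_, fun t => ?_⟩
    · simp only [hf_def, if_neg (show ¬(S < t ∧ t < E) by omega)]
      exact hq.2.1 t ht
    · simp only [hf_def]
      split_ifs
      exacts [(wdist_self _).trans_le (Nat.zero_le k), hq.2.2 t]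
  have houter : ∀ t, ¬(S < t ∧ t < E) → f t = q t := fun t ht => if_neg ht
  have hinner : ∀ t, S < t → t < E → f t = pathAt g₀ w t := fun t h₁ h₂ => if_pos ⟨h₁, h₂⟩
  have hcost : chainLength X q S E ≤ chainLength X f S E := by
    have := hmin f hf
    rw [← chainLength_add (Nat.zero_le S) (hSE.trans hE), ← chainLength_add hSE hE,
      ← chainLength_add (Nat.zero_le S) (hSE.trans hE), ← chainLength_add hSE hE,
      chainLength_congr (fun t _ ht => houter t (by omega)),
      chainLength_congr (E := w.length) (fun t ht _ => houter t (by omega))] at this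
    omega
  have hSdist : wdist X (f S) (pathAt g₀ w S) ≤ k := by
    rw [houter S (by omega), wdist_comm hgen]
    exact hq.2.2 S
  have hEdist : wdist X (pathAt g₀ w E) (f E) ≤ k := by
    rw [houter E (by omega)]
    exact hq.2.2 E
  have hpath : chainLength X (pathAt g₀ w) S E ≤ E - S :=
    chainLength_pathAt_comp_le hw g₀ monotone_id hSE
  have hsplice := chainLength_le_of_eqOn_Ioo hgen hlt hinner
  omega

end Shadow

section Padding

def padding (a : G) : ℕ → List G
  | 0 => []
  | p + 1 => a :: a⁻¹ :: padding a p

theorem prod_padding (a : G) (p : ℕ) : (padding a p).prod = 1 := by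
  induction p <;> simp [padding, *]

theorem length_padding (a : G) (p : ℕ) : (padding a p).length = 2 * p := by
  induction p with
  | zero => rfl
  | succ p ih => simp [padding, ih, Nat.mul_succ]

theorem isWord_padding {a : G} (ha : a ∈ X) (p : ℕ) : IsWord X (padding a p) := by
  induction p with
  | zero => exact isWord_nil
  | succ p ih =>
    intro x hx
    simp only [padding, List.mem_cons] at hx
    rcases hx with rfl | rfl | hx
    exacts [Or.inl ha, Or.inr (by simpa using ha), ih x hx]

theorem prod_take_padding (a : G) (p i : ℕ) :
    ((padding a p).take i).prod = 1 ∨ ((padding a p).take i).prod = a := by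
  induction p generalizing i with
  | zero => simp [padding]
  | succ p ih =>
    match i with
    | 0 => simp
    | 1 => simp [padding]
    | i + 2 => simpa [padding] using ih i

theorem wdist_mul_prod_take_append_padding_le {a : G} (ha : a ∈ X) {l : List G}
    (hl : IsWord X l) (g : G) (p j : ℕ) :
    wdist X g (g * ((l ++ padding a p).take j).prod) ≤ l.length + 1 := by
  rw [List.take_append, List.prod_append, ← mul_assoc]
  rcases prod_take_padding a p (j - l.length) with h | h <;> rw [h]
  · rw [mul_one]
    refine (wdist_mul_prod_le (hl.take j) g).trans ?_
    simp only [List.length_take]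
    omega
  · have := wdist_mul_prod_le ((hl.take j).append (isWord_singleton ha)) g
    rw [List.prod_append, List.prod_singleton, ← mul_assoc, List.length_append,
      List.length_take, List.length_singleton] at this
    exact this.trans (by omega)

end Padding

section PaddedChain

variable (X) in
/-- Segment `t` runs along a geodesic from `q t` to `q (t + 1)` and is then padded with
`a a⁻¹` pairs until the word is at most `c` letters shorter than the elapsed time `t + 1`. -/
noncomputable def paddedChain (a : G) (c : ℕ) (q : ℕ → G) : ℕ → List G
  | 0 => []
  | t + 1 =>
    paddedChain a c q t ++ (geodesic X (q t) (q (t + 1)) ++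
      padding a ((t + 2 - (c + (paddedChain a c q t).length + wdist X (q t) (q (t + 1)))) / 2))

variable {a : G} {c : ℕ} {q : ℕ → G}

theorem paddedChain_prefix {s t : ℕ} (h : s ≤ t) :
    paddedChain X a c q s <+: paddedChain X a c q t := by
  induction t, h using Nat.le_induction with
  | base => exact List.prefix_refl _
  | succ t _ ih => exact ih.trans (List.prefix_append _ _)

section Generating

variable (hgen : Subgroup.closure X = ⊤)
include hgen

theorem isWord_paddedChain (ha : a ∈ X) (t : ℕ) : IsWord X (paddedChain X a c q t) := by
  induction t with
  | zero => exact isWord_nil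
  | succ t ih => exact ih.append ((isWord_geodesic hgen _ _).append (isWord_padding ha _))

theorem mul_prod_paddedChain (t : ℕ) : q 0 * (paddedChain X a c q t).prod = q t := by
  induction t with
  | zero => simp [paddedChain]
  | succ t ih =>
    rw [paddedChain, List.prod_append, List.prod_append, prod_padding, mul_one, ← mul_assoc, ih,
      mul_prod_geodesic hgen]

theorem length_paddedChain_succ (t : ℕ) :
    (paddedChain X a c q (t + 1)).length =
      (paddedChain X a c q t).length + wdist X (q t) (q (t + 1)) +
        2 * ((t + 2 - (c + (paddedChain X a c q t).length + wdist X (q t) (q (t + 1)))) / 2) := by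
  rw [paddedChain, List.length_append, List.length_append, length_padding, length_geodesic hgen]
  omega

theorem le_length_paddedChain_add (t : ℕ) : t ≤ (paddedChain X a c q t).length + c := by
  cases t with
  | zero => exact Nat.zero_le _
  | succ t =>
    rw [length_paddedChain_succ hgen]
    omega

theorem length_paddedChain_succ_eq_or_le (t : ℕ) :
    (paddedChain X a c q (t + 1)).length =
        (paddedChain X a c q t).length + wdist X (q t) (q (t + 1)) ∨
      (paddedChain X a c q (t + 1)).length + c ≤ t + 2 := by
  rw [length_paddedChain_succ hgen]
  omega

/-- Either the word was never padded, or `s` is the last time it was padded; after that it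
grows exactly as the chain does. -/
theorem length_paddedChain_le_or (t : ℕ) :
    (paddedChain X a c q t).length ≤ chainLength X q 0 t ∨
      ∃ s ≤ t, (paddedChain X a c q t).length + c + chainLength X q 0 s ≤
        s + 1 + chainLength X q 0 t := by
  induction t with
  | zero => simp [paddedChain]
  | succ t ih =>
    rw [chainLength_succ (Nat.zero_le t)]
    rcases length_paddedChain_succ_eq_or_le hgen (a := a) (c := c) (q := q) t with h | h
    · rw [h]
      rcases ih with ih | ⟨s, hs, ih⟩
      · exact Or.inl (by omega)
      · exact Or.inr ⟨s, by omega, by omega⟩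
    · exact Or.inr ⟨t + 1, le_rfl, by rw [chainLength_succ (Nat.zero_le t)]; omega⟩

theorem length_paddedChain_le_or_lt {C n : ℕ}
    (hdraw : ∀ S E, S ≤ E → E ≤ n → chainLength X q S E ≤ E - S + C) {t : ℕ} (ht : t ≤ n) :
    (paddedChain X a (C + 2) q t).length ≤ chainLength X q 0 t ∨
      (paddedChain X a (C + 2) q t).length < t := by
  rcases length_paddedChain_le_or hgen t with h | ⟨s, hs, h⟩
  · exact Or.inl h
  · have := chainLength_add (X := X) (q := q) (Nat.zero_le s) hs
    have := hdraw s t hs ht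
    exact Or.inr (by omega)

theorem wdist_pathAt_paddedChain_le (ha : a ∈ X) {t T : ℕ} {v : List G}
    (hv : paddedChain X a c q (t + 1) <+: v) (h₁ : (paddedChain X a c q t).length ≤ T)
    (h₂ : T ≤ (paddedChain X a c q (t + 1)).length) :
    wdist X (q t) (pathAt (q 0) v T) ≤ wdist X (q t) (q (t + 1)) + 1 := by
  obtain ⟨r, rfl⟩ := hv
  rw [pathAt, List.take_append_of_le_length h₂, paddedChain, List.take_append,
    List.take_of_length_le h₁, List.prod_append, ← mul_assoc, mul_prod_paddedChain hgen]
  exact (wdist_mul_prod_take_append_padding_le ha (isWord_geodesic hgen _ _) _ _ _).trans_eq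
    (by rw [length_geodesic hgen])

end Generating

end PaddedChain

theorem exists_le_lt_succ_of_lt {M : ℕ → ℕ} {T n : ℕ} (h₀ : M 0 ≤ T) (hn : T < M n) :
    ∃ t < n, M t ≤ T ∧ T < M (t + 1) := by
  induction n with
  | zero => omega
  | succ n ih =>
    by_cases h : T < M n
    · obtain ⟨t, ht, h'⟩ := ih h
      exact ⟨t, by omega, h'⟩
    · exact ⟨n, by omega, by omega, hn⟩

theorem exists_isLoop_near_chain (hgen : Subgroup.closure X = ⊤) {a : G} (ha : a ∈ X)
    {q : ℕ → G} {g₀ : G} {n C : ℕ} (hq₀ : q 0 = g₀) (hqn : ∀ t, n ≤ t → q t = g₀)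
    (hdraw : ∀ S E, S ≤ E → E ≤ n → chainLength X q S E ≤ E - S + C)
    (hlen : chainLength X q 0 n < n) :
    ∃ v, IsWord X v ∧ IsLoop v ∧ v.length < n ∧
      ∀ T, ∃ t, T ≤ t + (C + 2) ∧ t ≤ T + (C + 2) ∧ wdist X (q t) (pathAt g₀ v T) ≤ C + 2 := by
  have hloop : IsLoop (paddedChain X a (C + 2) q n) := by
    have := mul_prod_paddedChain hgen (a := a) (c := C + 2) (q := q) n
    rwa [hqn n le_rfl, ← hq₀, mul_eq_left] at this
  have hlow : ∀ t, t ≤ (paddedChain X a (C + 2) q t).length + (C + 2) :=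
    le_length_paddedChain_add hgen
  have hhigh : ∀ t ≤ n, (paddedChain X a (C + 2) q t).length ≤ t + C := fun t ht => by
    have := hdraw 0 t (Nat.zero_le t) ht
    rcases length_paddedChain_le_or_lt hgen (a := a) hdraw ht with h | h <;> omega
  refine ⟨_, isWord_paddedChain hgen ha n, hloop, ?_, fun T => ?_⟩
  · rcases length_paddedChain_le_or_lt hgen (a := a) hdraw le_rfl with h | h <;> omega
  by_cases hT : (paddedChain X a (C + 2) q n).length ≤ T
  · refine ⟨max T n, le_max_left _ _ |>.trans le_self_add, ?_, ?_⟩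
    · have := hlow n
      omega
    · rw [hqn _ (le_max_right _ _), hloop.pathAt_of_length_le g₀ hT, wdist_self]
      exact Nat.zero_le _
  obtain ⟨t, htn, h₁, h₂⟩ := exists_le_lt_succ_of_lt
    (M := fun t => (paddedChain X a (C + 2) q t).length) (Nat.zero_le T) (not_le.mp hT)
  have hstep := hdraw t (t + 1) (Nat.le_add_right t 1) htn
  rw [chainLength_self_succ] at hstep
  refine ⟨t, by have := hhigh (t + 1) htn; omega, by have := hlow t; omega, ?_⟩
  rw [← hq₀]
  refine (wdist_pathAt_paddedChain_le hgen ha (paddedChain_prefix htn) h₁ h₂.le).trans ?_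
  omega

theorem SyncFellow.asyncFellow {k : ℕ} {g₀ h₀ : G} {w u : List G}
    (h : SyncFellow X k g₀ w h₀ u) : AsyncFellow X k g₀ w h₀ u :=
  ⟨id, monotone_id, fun m => ⟨m, le_rfl⟩, h⟩

theorem AsyncFellow.exists_syncFellow (hgen : Subgroup.closure X = ⊤) {k : ℕ} {g₀ : G}
    {w u : List G} (hw : IsWord X w) (hwl : IsLoop w) (hne : w ≠ []) (hu : IsWord X u)
    (hul : IsLoop u) (hlt : u.length < w.length) (h : AsyncFellow X k g₀ w g₀ u) :
    ∃ v, IsWord X v ∧ IsLoop v ∧ v.length < w.length ∧ SyncFellow X (5 * k + 4) g₀ w g₀ v := by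
  obtain ⟨a, ha⟩ : ∃ a, a ∈ X := by
    obtain ⟨x, hx⟩ := List.exists_mem_of_ne_nil w hne
    rcases hw x hx with h | h
    exacts [⟨x, h⟩, ⟨x⁻¹, h⟩]
  obtain ⟨q₁, hq₁, hcost₁⟩ := h.exists_isShadow hu hul hwl
  obtain ⟨q, hq, hmin⟩ := (InvImage.wf (fun f => chainLength X f 0 w.length) wellFounded_lt).has_min
    {f | IsShadow X k g₀ w f} ⟨q₁, hq₁⟩
  replace hmin : ∀ f, IsShadow X k g₀ w f →
      chainLength X q 0 w.length ≤ chainLength X f 0 w.length :=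
    fun f hf => not_lt.mp (hmin f hf)
  obtain ⟨v, hv, hvl, hvlen, hclose⟩ := exists_isLoop_near_chain hgen ha hq.1 hq.2.1
    (fun S E => hq.chainLength_le_of_minimal hgen hw hmin)
    ((hmin q₁ hq₁).trans_lt (hcost₁.trans_lt hlt))
  refine ⟨v, hv, hvl, hvlen, fun T => ?_⟩
  obtain ⟨t, hTt, htT, hqv⟩ := hclose T
  have hwT := wdist_pathAt_le hgen hw g₀ T t
  have hwq := hq.2.2 t
  have := wdist_triangle hgen (pathAt g₀ w T) (pathAt g₀ w t) (pathAt g₀ v T)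
  have := wdist_triangle hgen (pathAt g₀ w t) (q t) (pathAt g₀ v T)
  omega

theorem asyncBLSP_iff_syncBLSP_general {G : Type*} [Group G] (X : Set G)
    (hgen : Subgroup.closure X = ⊤) :
    AsyncBLSP X ↔ SyncBLSP X := by
  constructor
  · rintro ⟨k, -, hA⟩
    refine ⟨5 * k + 4, by omega, fun g₀ w hw hwl hne => ?_⟩
    obtain ⟨u, hu, hul, hlt, hasync⟩ := hA g₀ w hw hwl hne
    exact hasync.exists_syncFellow hgen hw hwl hne hu hul hlt
  · rintro ⟨k, hk, hS⟩
    refine ⟨k, hk, fun g₀ w hw hwl hne => ?_⟩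
    obtain ⟨u, hu, hul, hlt, hsync⟩ := hS g₀ w hw hwl hne
    exact ⟨u, hu, hul, hlt, hsync.asyncFellow⟩

/-- For a group `G` with finite generating set `X`, the asynchronous basepoint loop
shortening property holds if and only if the synchronous basepoint loop shortening
property holds. -/
theorem asyncBLSP_iff_syncBLSP {G : Type*} [Group G] (X : Set G) (hfin : X.Finite)
    (hgen : Subgroup.closure X = ⊤) :
    AsyncBLSP X ↔ SyncBLSP X :=
  asyncBLSP_iff_syncBLSP_general X hgen

end LoopShortening
end

section
/- Let G be a group with a finite generating set X having the loop shortening property with constant k > 0, and consider the finite presentation ⟨X | R⟩ of G where R is the set of all words r over X ∪ X⁻¹ with |r| ≤ 2k+2 representing the identity of G. Then every word w over X ∪ X⁻¹ representing the identity of G has area A(w) ≤ |w|². In particular G has a quadratic isoperimetric function. -/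
/-! Fellow-travelling a loop `w` with a shorter loop `u` at distance `≤ k` fills the region
between them by a ladder of `|w|` cells, each bounded by two connecting words of length `≤ k`
and one letter of each loop, hence a relator of length `≤ 2k + 2`. So `w` is a product of `|w|`
conjugates of relators times a conjugate of `u`, and induction on `|w|` gives area at most
`|w| + (|w| - 1)² ≤ |w|²`. -/

namespace LoopShortening

variable {G : Type*} [Group G]

section ConjProd

variable {F : Type*} [Group F]

def IsConjProd (R : Set F) (m : ℕ) (x : F) : Prop :=
  ∃ g r : Fin m → F, (∀ i, r i ∈ R ∨ (r i)⁻¹ ∈ R) ∧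
    x = (List.ofFn (fun i => g i * r i * (g i)⁻¹)).prod

variable {R : Set F} {m n : ℕ} {x y : F}

theorem isConjProd_zero_one : IsConjProd R 0 1 :=
  ⟨Fin.elim0, Fin.elim0, fun i => i.elim0, by simp⟩

theorem isConjProd_one_conj {r : F} (hr : r ∈ R) (g : F) : IsConjProd R 1 (g * r * g⁻¹) :=
  ⟨fun _ => g, fun _ => r, fun _ => Or.inl hr, by simp⟩

theorem IsConjProd.mul (hx : IsConjProd R m x) (hy : IsConjProd R n y) :
    IsConjProd R (m + n) (x * y) := by
  obtain ⟨g, r, hr, rfl⟩ := hx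
  obtain ⟨g', r', hr', rfl⟩ := hy
  refine ⟨Fin.append g g', Fin.append r r',
    Fin.addCases (by simpa using hr) (by simpa using hr'), ?_⟩
  have : (fun i => Fin.append g g' i * Fin.append r r' i * (Fin.append g g' i)⁻¹) =
      Fin.append (fun i => g i * r i * (g i)⁻¹) (fun i => g' i * r' i * (g' i)⁻¹) := by
    funext i
    refine Fin.addCases (fun j => ?_) (fun j => ?_) i <;> simp
  rw [this, List.ofFn_fin_append, List.prod_append]

theorem IsConjProd.conj (hx : IsConjProd R m x) (c : F) : IsConjProd R m (c * x * c⁻¹) := by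
  obtain ⟨g, r, hr, rfl⟩ := hx
  refine ⟨fun i => c * g i, r, hr, ?_⟩
  rw [← MulAut.conj_apply, map_list_prod, List.map_ofFn]
  refine congrArg _ (congrArg List.ofFn (funext fun i => ?_))
  simp only [Function.comp_apply, MulAut.conj_apply]
  group

theorem isConjProd_telescope (q : ℕ → F)
    (hq : ∀ t < n, ∃ g r, r ∈ R ∧ (q t)⁻¹ * q (t + 1) = g * r * g⁻¹) :
    IsConjProd R n ((q 0)⁻¹ * q n) := by
  induction n with
  | zero => simpa using isConjProd_zero_one
  | succ n ih =>
    obtain ⟨g, r, hr, hstep⟩ := hq n n.lt_succ_self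
    have := (ih fun t ht => hq t (ht.trans n.lt_succ_self)).mul (isConjProd_one_conj hr g)
    rwa [← hstep, mul_assoc, mul_inv_cancel_left] at this

end ConjProd

section Ladder

variable {α : Type*}

def boundedRelators (φ : FreeGroup α →* G) (n : ℕ) : Set (FreeGroup α) :=
  {r | φ r = 1 ∧ ∃ l : List (α × Bool), l.length ≤ n ∧ FreeGroup.mk l = r}

theorem isConjProd_ladder (φ : FreeGroup α →* G) {k n : ℕ} (w u : List (α × Bool))
    (c : ℕ → List (α × Bool)) (hc : ∀ t, (c t).length ≤ k) (g : G)
    (hrung : ∀ t ≤ n,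
      φ (FreeGroup.mk (w.take t) * FreeGroup.mk (c t) * (FreeGroup.mk (u.take t))⁻¹) = g) :
    IsConjProd (boundedRelators φ (2 * k + 2)) n
      ((FreeGroup.mk (c 0))⁻¹ * FreeGroup.mk (w.take n) * FreeGroup.mk (c n) *
        (FreeGroup.mk (u.take n))⁻¹) := by
  obtain ⟨q, hq⟩ : ∃ q : ℕ → FreeGroup α, ∀ t,
      q t = FreeGroup.mk (w.take t) * FreeGroup.mk (c t) * (FreeGroup.mk (u.take t))⁻¹ :=
    ⟨_, fun _ => rfl⟩
  have := isConjProd_telescope (R := boundedRelators φ (2 * k + 2)) (n := n) q fun t ht => ?_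
  · simpa [hq, ← FreeGroup.one_eq_mk, mul_assoc] using this
  set cell := FreeGroup.mk
    (FreeGroup.invRev (c t) ++ w[t]?.toList ++ c (t + 1) ++ FreeGroup.invRev u[t]?.toList)
  have hcell : cell =
      (FreeGroup.mk (u.take t))⁻¹ * ((q t)⁻¹ * q (t + 1)) * FreeGroup.mk (u.take t) := by
    simp only [cell, hq, List.take_add_one, ← FreeGroup.mul_mk, ← FreeGroup.inv_mk]
    group
  have hletter (o : Option (α × Bool)) : o.toList.length ≤ 1 := by cases o <;> simp
  refine ⟨FreeGroup.mk (u.take t), cell, ⟨?_, _, ?_, rfl⟩, by rw [hcell]; group⟩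
  · simp only [hcell, map_mul, map_inv, hq, hrung t ht.le, hrung (t + 1) ht]
    group
  · simp only [List.length_append, FreeGroup.invRev_length]
    have := hc t; have := hc (t + 1); have := hletter w[t]?; have := hletter u[t]?
    omega

end Ladder

section Words

variable {X : Set G}

def evalLetter (p : X × Bool) : G := cond p.2 p.1 (p.1 : G)⁻¹

theorem lift_mk_eq_prod_map_evalLetter (l : List (X × Bool)) :
    FreeGroup.lift ((↑) : X → G) (FreeGroup.mk l) = (l.map evalLetter).prod :=
  FreeGroup.lift_mk

theorem isWord_map_evalLetter (l : List (X × Bool)) : IsWord X (l.map evalLetter) := by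
  simp only [IsWord, List.mem_map]
  rintro _ ⟨⟨x, b⟩, -, rfl⟩
  cases b <;> simp [evalLetter, x.2]

theorem exists_map_evalLetter_eq {u : List G} (hu : IsWord X u) :
    ∃ l : List (X × Bool), l.map evalLetter = u := by
  induction u with
  | nil => exact ⟨[], rfl⟩
  | cons a u ih =>
    obtain ⟨l, rfl⟩ := ih fun x hx => hu x (List.mem_cons_of_mem _ hx)
    rcases hu a List.mem_cons_self with h | h
    · exact ⟨(⟨a, h⟩, true) :: l, rfl⟩
    · exact ⟨(⟨a⁻¹, h⟩, false) :: l, by simp [evalLetter]⟩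

theorem pathAt_map_evalLetter (g₀ : G) (l : List (X × Bool)) (t : ℕ) :
    pathAt g₀ (l.map evalLetter) t =
      g₀ * FreeGroup.lift ((↑) : X → G) (FreeGroup.mk (l.take t)) := by
  rw [pathAt, lift_mk_eq_prod_map_evalLetter, List.map_take]

theorem exists_length_le_of_wdist_le (hgen : Subgroup.closure X = ⊤) {g h : G} {k : ℕ}
    (hd : wdist X g h ≤ k) :
    ∃ c : List (X × Bool), c.length ≤ k ∧
      FreeGroup.lift ((↑) : X → G) (FreeGroup.mk c) = g⁻¹ * h := by
  have hmem : g⁻¹ * h ∈ Submonoid.closure (X ∪ X⁻¹) := by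
    rw [← Subgroup.closure_toSubmonoid, hgen]; trivial
  obtain ⟨l, hlX, hl⟩ := Submonoid.exists_list_of_mem_closure hmem
  have hne : {n : ℕ | ∃ l : List G, IsWord X l ∧ l.length = n ∧ g * l.prod = h}.Nonempty :=
    ⟨l.length, l, hlX, rfl, by rw [hl, mul_inv_cancel_left]⟩
  obtain ⟨l₀, hl₀X, hl₀len, hl₀⟩ := Nat.sInf_mem hne
  obtain ⟨c, rfl⟩ := exists_map_evalLetter_eq hl₀X
  refine ⟨c, (List.length_map _).symm.trans hl₀len ▸ hd, ?_⟩
  rw [lift_mk_eq_prod_map_evalLetter, ← hl₀, inv_mul_cancel_left]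

def HasLoopShortening (X : Set G) (k : ℕ) : Prop :=
  ∀ (g₀ : G) (w : List G), IsWord X w → IsLoop w → w ≠ [] →
    ∃ (h₀ : G) (u : List G), IsWord X u ∧ IsLoop u ∧ u.length < w.length ∧
      SyncFellow X k g₀ w h₀ u

variable {k : ℕ}

theorem exists_shorter_loop (hgen : Subgroup.closure X = ⊤) (hLSP : HasLoopShortening X k)
    {w : List (X × Bool)} (hw : FreeGroup.lift ((↑) : X → G) (FreeGroup.mk w) = 1)
    (hne : w ≠ []) :
    ∃ u c : List (X × Bool), u.length < w.length ∧
      FreeGroup.lift ((↑) : X → G) (FreeGroup.mk u) = 1 ∧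
      IsConjProd (boundedRelators (FreeGroup.lift ((↑) : X → G)) (2 * k + 2)) w.length
        ((FreeGroup.mk c)⁻¹ * FreeGroup.mk w * FreeGroup.mk c * (FreeGroup.mk u)⁻¹) := by
  obtain ⟨h₀, uG, huG, huL, hlen, hfellow⟩ :=
    hLSP 1 (w.map evalLetter) (isWord_map_evalLetter w)
    (by rwa [IsLoop, ← lift_mk_eq_prod_map_evalLetter]) (by simpa using hne)
  obtain ⟨u, rfl⟩ := exists_map_evalLetter_eq huG
  rw [List.length_map, List.length_map] at hlen
  have hu : FreeGroup.lift ((↑) : X → G) (FreeGroup.mk u) = 1 := by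
    rwa [lift_mk_eq_prod_map_evalLetter]
  choose D hDlen hD using fun t => exists_length_le_of_wdist_le hgen (hfellow t)
  simp only [pathAt_map_evalLetter, one_mul] at hD
  have hrung (t : ℕ) : FreeGroup.lift ((↑) : X → G)
      (FreeGroup.mk (w.take t) * FreeGroup.mk (D t) * (FreeGroup.mk (u.take t))⁻¹) = h₀ := by
    rw [map_mul, map_mul, map_inv, hD]
    group
  refine ⟨u, D 0, hlen, hu, ?_⟩
  -- close the ladder with the rung at time `0`, so that its two ends are the same word
  have := isConjProd_ladder (FreeGroup.lift ((↑) : X → G)) w u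
    (Function.update D w.length (D 0))
    (fun t => by rw [Function.update_apply]; split_ifs <;> exact hDlen _) h₀ (n := w.length)
    fun t ht => ?_
  · rwa [Function.update_of_ne (List.length_pos_iff.mpr hne).ne, Function.update_self,
      List.take_of_length_le le_rfl, List.take_of_length_le hlen.le] at this
  rcases eq_or_ne t w.length with rfl | ht'
  · rw [Function.update_self, List.take_of_length_le le_rfl, List.take_of_length_le hlen.le,
      map_mul, map_mul, map_inv, hw, hu, one_mul, inv_one, mul_one]
    simpa only [List.take_zero, ← FreeGroup.one_eq_mk, one_mul, inv_one, mul_one, map_mul,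
      map_inv] using hrung 0
  · simpa only [Function.update_of_ne ht'] using hrung t

theorem exists_area_le_sq (hgen : Subgroup.closure X = ⊤) (hLSP : HasLoopShortening X k)
    (w : List (X × Bool)) (hw : FreeGroup.lift ((↑) : X → G) (FreeGroup.mk w) = 1) :
    ∃ m ≤ w.length ^ 2,
      IsConjProd (boundedRelators (FreeGroup.lift ((↑) : X → G)) (2 * k + 2)) m
        (FreeGroup.mk w) := by
  induction hN : w.length using Nat.strong_induction_on generalizing w with
  | _ N ih =>
    rcases eq_or_ne w [] with rfl | hne
    · exact ⟨0, Nat.zero_le _, by simpa [← FreeGroup.one_eq_mk] using isConjProd_zero_one⟩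
    obtain ⟨u, c, hlen, hu, hcells⟩ := exists_shorter_loop hgen hLSP hw hne
    obtain ⟨m, hm, hum⟩ := ih u.length (hN ▸ hlen) u hu rfl
    refine ⟨N + m, by nlinarith, ?_⟩
    convert (hN ▸ hcells.mul hum).conj (FreeGroup.mk c) using 1
    group

end Words

theorem loopShortening_quadratic_isoperimetric_general {G : Type*} [Group G] (X : Set G)
    (hgen : Subgroup.closure X = ⊤) (k : ℕ)
    -- `(G,X)` has the loop shortening property with constant `k`:
    (hLSP : ∀ (g₀ : G) (w : List G), IsWord X w → IsLoop w → w ≠ [] →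
      ∃ (h₀ : G) (u : List G), IsWord X u ∧ IsLoop u ∧ u.length < w.length ∧
        SyncFellow X k g₀ w h₀ u)
    -- the relator set `R`:
    (R : Set (FreeGroup X))
    (hR : R = {r : FreeGroup X |
        FreeGroup.lift (fun x : X => (x : G)) r = 1 ∧
        ∃ l : List (X × Bool), l.length ≤ 2 * k + 2 ∧ FreeGroup.mk l = r}) :
    -- every word over `X ∪ X⁻¹` representing `1 ∈ G` has area at most `|w|²`:
    ∀ w : List (X × Bool),
      FreeGroup.lift (fun x : X => (x : G)) (FreeGroup.mk w) = 1 →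
      ∃ m : ℕ, m ≤ w.length ^ 2 ∧
        ∃ g r : Fin m → FreeGroup X, (∀ i, r i ∈ R ∨ (r i)⁻¹ ∈ R) ∧
          FreeGroup.mk w = (List.ofFn (fun i => g i * r i * (g i)⁻¹)).prod := by
  intro w hw
  subst hR
  exact exists_area_le_sq hgen hLSP w hw

/-- If `(G,X)` has the loop shortening property with constant `k > 0`, then with
respect to the finite presentation `⟨X | R⟩` of `G`, where `R` is the set of all
words over `X ∪ X⁻¹` of length at most `2k+2` representing the identity of `G`,
every word `w` over `X ∪ X⁻¹` representing the identity of `G` has area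
`A(w) ≤ |w|²`: it is equal in the free group on `X` to a product of at most `|w|²`
conjugates of relators in `R ∪ R⁻¹`. In particular `G` has a quadratic
isoperimetric function. -/
theorem loopShortening_quadratic_isoperimetric {G : Type*} [Group G] (X : Set G)
    (hfin : X.Finite) (hgen : Subgroup.closure X = ⊤) (k : ℕ) (hk : 0 < k)
    -- `(G,X)` has the loop shortening property with constant `k`:
    (hLSP : ∀ (g₀ : G) (w : List G), IsWord X w → IsLoop w → w ≠ [] →
      ∃ (h₀ : G) (u : List G), IsWord X u ∧ IsLoop u ∧ u.length < w.length ∧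
        SyncFellow X k g₀ w h₀ u)
    -- the relator set `R`:
    (R : Set (FreeGroup X))
    (hR : R = {r : FreeGroup X |
        FreeGroup.lift (fun x : X => (x : G)) r = 1 ∧
        ∃ l : List (X × Bool), l.length ≤ 2 * k + 2 ∧ FreeGroup.mk l = r}) :
    -- every word over `X ∪ X⁻¹` representing `1 ∈ G` has area at most `|w|²`:
    ∀ w : List (X × Bool),
      FreeGroup.lift (fun x : X => (x : G)) (FreeGroup.mk w) = 1 →
      ∃ m : ℕ, m ≤ w.length ^ 2 ∧
        ∃ g r : Fin m → FreeGroup X, (∀ i, r i ∈ R ∨ (r i)⁻¹ ∈ R) ∧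
          FreeGroup.mk w = (List.ofFn (fun i => g i * r i * (g i)⁻¹)).prod :=
  loopShortening_quadratic_isoperimetric_general X hgen k hLSP R hR

end LoopShortening
end
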